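/- Define the discrete iterated kernels by K_0 = K and K_n(t,s) = Σ_{η=s+1}^{t-1} K(t,η) K_{n-1}(η,s) for n ≥ 1, and the discrete resolvent kernel Γ(λ;t,s) = Σ_{ℓ=0}^{t-s} K_ℓ(t,s) λ^ℓ. Then for every λ ∈ ℝ the function φ(t) = λ Σ_{η=a}^{t-1} Γ(λ;t,η) f(η) + f(t) is the unique solution of the discrete Volterra equation φ(t) = λ Σ_{η=a}^{t-1} K(t,η) φ(η) + f(t) for integers a ≤ t ≤ b. -/

import Mathlib

open Finset

/-- The discrete iterated kernels: `K₀ = K` and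
`Kₙ(t,s) = Σ_{η=s+1}^{t-1} K(t,η) K_{n-1}(η,s)` for `n ≥ 1`. -/
noncomputable def iterKZ (K : ℤ → ℤ → ℝ) : ℕ → ℤ → ℤ → ℝ
  | 0 => K
  | n + 1 => fun t s => ∑ η ∈ Finset.Ioo s t, K t η * iterKZ K n η s

/-- The discrete resolvent kernel `Γ(λ;t,s) = Σ_{ℓ=0}^{t-s} K_ℓ(t,s) λ^ℓ`. -/
noncomputable def resolventKerZ (K : ℤ → ℤ → ℝ) (lam : ℝ) (t s : ℤ) : ℝ :=
  ∑ ℓ ∈ Finset.range ((t - s).toNat + 1), iterKZ K ℓ t s * lam ^ ℓ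

/-!
On `ℤ` the resolvent kernel satisfies the resolvent equation
`Γ(t,s) = K(t,s) + λ Σ_{s<η<t} K(t,η) Γ(η,s)`, because `K_{ℓ+1}(t,s)` is obtained from the
`K_ℓ(η,s)` by one more summation against `K(t,η)` and the series terminates. Summing it against
`f` and exchanging the two summations shows that `φ(t) = λ Σ_{a≤η<t} Γ(t,η) f(η) + f(t)` solves
the Volterra equation. Uniqueness holds because the equation determines `φ(t)` from the values
`φ(η)`, `η < t`, so two solutions agree by strong induction on `t - a`.
-/

section Resolvent

variable (K : ℤ → ℤ → ℝ) (lam : ℝ)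

theorem iterKZ_succ_eq_zero (n : ℕ) {t s : ℤ} (h : t - s ≤ n + 1) : iterKZ K (n + 1) t s = 0 := by
  induction n generalizing t with
  | zero => exact sum_eq_zero fun η hη => by rw [mem_Ioo] at hη; omega
  | succ n ih =>
    refine sum_eq_zero fun η hη => ?_
    rw [mem_Ioo] at hη
    rw [ih (by omega), mul_zero]

theorem resolventKerZ_eq_sum_range {t s : ℤ} {N : ℕ} (hN : (t - s).toNat < N) :
    resolventKerZ K lam t s = ∑ ℓ ∈ range N, iterKZ K ℓ t s * lam ^ ℓ := by
  refine sum_subset (range_subset_range.mpr hN) fun ℓ _ hℓ => ?_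
  rw [mem_range, not_lt] at hℓ
  obtain ⟨m, rfl⟩ : ∃ m, ℓ = m + 1 := ⟨ℓ - 1, by omega⟩
  rw [iterKZ_succ_eq_zero K m (by omega), zero_mul]

theorem resolventKerZ_eq_add_sum (t s : ℤ) :
    resolventKerZ K lam t s = K t s + lam * ∑ η ∈ Ioo s t, K t η * resolventKerZ K lam η s := by
  have hΓ : ∀ η ∈ Ioo s t,
      resolventKerZ K lam η s = ∑ ℓ ∈ range (t - s).toNat, iterKZ K ℓ η s * lam ^ ℓ := by
    intro η hη
    rw [mem_Ioo] at hη
    exact resolventKerZ_eq_sum_range K lam (by omega)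
  rw [sum_congr rfl fun η hη => by rw [hΓ η hη], resolventKerZ, sum_range_succ', add_comm]
  simp only [iterKZ, pow_zero, mul_one, pow_succ, sum_mul, mul_sum]
  rw [sum_comm]
  congr 1
  refine sum_congr rfl fun η _ => sum_congr rfl fun ℓ _ => ?_
  ring

end Resolvent

noncomputable def resolventSolZ (K : ℤ → ℤ → ℝ) (f : ℤ → ℝ) (lam : ℝ) (a t : ℤ) : ℝ :=
  lam * (∑ η ∈ Ico a t, resolventKerZ K lam t η * f η) + f t

theorem sum_resolventKerZ_mul_eq (K : ℤ → ℤ → ℝ) (f : ℤ → ℝ) (lam : ℝ) (a t : ℤ) :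
    ∑ η ∈ Ico a t, resolventKerZ K lam t η * f η =
      ∑ η ∈ Ico a t, K t η * resolventSolZ K f lam a η := by
  have hswap : ∑ η ∈ Ico a t, ∑ ζ ∈ Ioo η t, K t ζ * resolventKerZ K lam ζ η * f η =
      ∑ ζ ∈ Ico a t, ∑ η ∈ Ico a ζ, K t ζ * resolventKerZ K lam ζ η * f η :=
    sum_comm' fun η ζ => by simp only [mem_Ico, mem_Ioo]; omega
  calc ∑ η ∈ Ico a t, resolventKerZ K lam t η * f η
      = ∑ η ∈ Ico a t, (K t η * f η +
          lam * ∑ ζ ∈ Ioo η t, K t ζ * resolventKerZ K lam ζ η * f η) := by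
        refine sum_congr rfl fun η _ => ?_
        rw [resolventKerZ_eq_add_sum K lam t η, add_mul, mul_assoc, sum_mul]
    _ = ∑ η ∈ Ico a t, (K t η * f η +
          lam * ∑ ζ ∈ Ico a η, K t η * resolventKerZ K lam η ζ * f ζ) := by
        rw [sum_add_distrib, sum_add_distrib, ← mul_sum, ← mul_sum, hswap]
    _ = ∑ η ∈ Ico a t, K t η * resolventSolZ K f lam a η := by
        refine sum_congr rfl fun η _ => ?_
        simp only [resolventSolZ, mul_add, mul_sum]
        rw [add_comm]
        congr 1
        exact sum_congr rfl fun ζ _ => by ring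

theorem resolventSolZ_eq (K : ℤ → ℤ → ℝ) (f : ℤ → ℝ) (lam : ℝ) (a t : ℤ) :
    resolventSolZ K f lam a t =
      lam * (∑ η ∈ Ico a t, K t η * resolventSolZ K f lam a η) + f t := by
  rw [resolventSolZ, sum_resolventKerZ_mul_eq]

theorem eq_of_volterra_eq {a b : ℤ} {K : ℤ → ℤ → ℝ} {f : ℤ → ℝ} {lam : ℝ} {φ ψ : ℤ → ℝ}
    (hφ : ∀ t, a ≤ t → t ≤ b → φ t = lam * (∑ η ∈ Ico a t, K t η * φ η) + f t)
    (hψ : ∀ t, a ≤ t → t ≤ b → ψ t = lam * (∑ η ∈ Ico a t, K t η * ψ η) + f t)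
    (t : ℤ) (ha : a ≤ t) (hb : t ≤ b) : φ t = ψ t := by
  rw [hφ t ha hb, hψ t ha hb]
  congr 2
  refine sum_congr rfl fun η hη => ?_
  obtain ⟨haη, hηt⟩ := mem_Ico.mp hη
  rw [eq_of_volterra_eq hφ hψ η haη (by omega)]
termination_by (t - a).toNat
decreasing_by omega

theorem discrete_resolvent_gives_unique_solution_general
    (a b : ℤ) (K : ℤ → ℤ → ℝ) (f : ℤ → ℝ) (lam : ℝ) :
    (∀ t : ℤ, a ≤ t → t ≤ b →
      (lam * (∑ η ∈ Finset.Ico a t, resolventKerZ K lam t η * f η) + f t) =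
        lam * (∑ η ∈ Finset.Ico a t,
          K t η * (lam * (∑ ζ ∈ Finset.Ico a η, resolventKerZ K lam η ζ * f ζ) + f η)) +
          f t) ∧
    ∀ ψ : ℤ → ℝ,
      (∀ t : ℤ, a ≤ t → t ≤ b →
        ψ t = lam * (∑ η ∈ Finset.Ico a t, K t η * ψ η) + f t) →
      ∀ t : ℤ, a ≤ t → t ≤ b →
        ψ t = lam * (∑ η ∈ Finset.Ico a t, resolventKerZ K lam t η * f η) + f t := by
  have hsol : ∀ t, a ≤ t → t ≤ b → resolventSolZ K f lam a t =
      lam * (∑ η ∈ Ico a t, K t η * resolventSolZ K f lam a η) + f t :=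
    fun t _ _ => resolventSolZ_eq K f lam a t
  exact ⟨hsol, fun ψ hψ => eq_of_volterra_eq hψ hsol⟩

/-- **Solution of the discrete Volterra equation via the resolvent kernel**
(case `T = ℤ`, where `σ(s) = s+1` and the Δ-integral from `a` to `t` is
`Σ_{η=a}^{t-1}`): for every `λ ∈ ℝ`, `φ(t) = λ Σ_{η=a}^{t-1} Γ(λ;t,η) f(η) + f(t)`
is the unique solution of `φ(t) = λ Σ_{η=a}^{t-1} K(t,η) φ(η) + f(t)` for integers
`a ≤ t ≤ b`. -/
theorem discrete_resolvent_gives_unique_solution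
    (a b : ℤ) (hab : a < b) (K : ℤ → ℤ → ℝ) (f : ℤ → ℝ) (lam : ℝ) :
    (∀ t : ℤ, a ≤ t → t ≤ b →
      (lam * (∑ η ∈ Finset.Ico a t, resolventKerZ K lam t η * f η) + f t) =
        lam * (∑ η ∈ Finset.Ico a t,
          K t η * (lam * (∑ ζ ∈ Finset.Ico a η, resolventKerZ K lam η ζ * f ζ) + f η)) +
          f t) ∧
    ∀ ψ : ℤ → ℝ,
      (∀ t : ℤ, a ≤ t → t ≤ b →
        ψ t = lam * (∑ η ∈ Finset.Ico a t, K t η * ψ η) + f t) →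
      ∀ t : ℤ, a ≤ t → t ≤ b →
        ψ t = lam * (∑ η ∈ Finset.Ico a t, resolventKerZ K lam t η * f η) + f t :=
  discrete_resolvent_gives_unique_solution_general a b K f lam
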